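/- Let B : Ω → ℝ^{2×2} be a measurable symmetric-matrix-valued field on a domain Ω ⊆ ℝ² satisfying mα ≤ λ₁(B(x)) ≤ λ₂(B(x)) ≤ Mα for a.e. x, with 0 < m ≤ M, 0 < α < 1, α ≤ (m+M)/(2m), and set ν = (m+M)/2. Then for all v, w ∈ H¹₀(Ω) with |v|_{H¹} = |w|_{H¹} = 1, |∫_Ω Dv·Dw − (1/ν)(B Dv)·Dw dx| ≤ γ for some constant γ ∈ (0,1) independent of v, w. -/

import Mathlib

/-!
Pointwise, `B(x)` is symmetric with spectrum in `[mα, Mα]`, so `B(x) - ν` has spectrum in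
`[mα - ν, Mα - ν] ⊆ [-(ν - mα), ν - mα]` (because `α < 1`), and hence operator norm at most
`ν - mα`. Thus `|Dv·Dw - (B Dv)·Dw / ν| ≤ γ |Dv| |Dw| ≤ γ (|Dv|² + |Dw|²) / 2` with
`γ = (ν - mα) / ν ∈ (0, 1)`, and integrating gives `γ` for `|v|_{H¹} = |w|_{H¹} = 1`.
-/

open Matrix MeasureTheory Module.End InnerProductSpace

theorem EuclideanSpace.norm_le_of_forall_norm_apply_le {𝕜 ι : Type*} [RCLike 𝕜] [Fintype ι]
    {x y : EuclideanSpace 𝕜 ι} {c : ℝ} (hc : 0 ≤ c) (h : ∀ i, ‖x i‖ ≤ c * ‖y i‖) :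
    ‖x‖ ≤ c * ‖y‖ := by
  refine le_of_sq_le_sq ?_ (by positivity)
  rw [mul_pow, EuclideanSpace.norm_sq_eq, EuclideanSpace.norm_sq_eq, Finset.mul_sum]
  refine Finset.sum_le_sum fun i _ => ?_
  rw [← mul_pow]
  exact pow_le_pow_left₀ (norm_nonneg _) (h i) 2

theorem LinearMap.IsSymmetric.norm_apply_sub_smul_le {𝕜 E : Type*} [RCLike 𝕜]
    [NormedAddCommGroup E] [InnerProductSpace 𝕜 E] [FiniteDimensional 𝕜 E] {T : E →ₗ[𝕜] E}
    (hT : T.IsSymmetric) {ν : 𝕜} {c : ℝ} (hc0 : 0 ≤ c)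
    (hc : ∀ μ, HasEigenvalue T μ → ‖μ - ν‖ ≤ c) (x : E) :
    ‖T x - ν • x‖ ≤ c * ‖x‖ := by
  set b := hT.eigenvectorBasis rfl
  rw [← b.repr.norm_map, ← b.repr.norm_map x]
  refine EuclideanSpace.norm_le_of_forall_norm_apply_le hc0 fun i => ?_
  rw [map_sub, map_smul, PiLp.sub_apply, PiLp.smul_apply, hT.eigenvectorBasis_apply_self_apply,
    smul_eq_mul, ← sub_mul, norm_mul]
  exact mul_le_mul_of_nonneg_right (hc _ (hT.hasEigenvalue_eigenvalues rfl i)) (norm_nonneg _)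

theorem Matrix.hasEigenvalue_toEuclideanLin_iff {𝕜 n : Type*} [RCLike 𝕜] [Fintype n]
    [DecidableEq n] (A : Matrix n n 𝕜) (μ : 𝕜) :
    HasEigenvalue (toEuclideanLin A) μ ↔ HasEigenvalue (toLin' A) μ := by
  rw [hasEigenvalue_iff_isRoot_charpoly, hasEigenvalue_iff_isRoot_charpoly,
    toEuclideanLin_eq_toLin_orthonormal, Matrix.charpoly_toLin, Matrix.charpoly_toLin']

section Gradient

variable {F : Type*} [NormedAddCommGroup F] [InnerProductSpace ℝ F] [CompleteSpace F] {u : F → ℝ}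

theorem ContDiff.continuous_gradient (hu : ContDiff ℝ 1 u) : Continuous (gradient u) :=
  (toDual ℝ F).symm.continuous.comp (hu.continuous_fderiv one_ne_zero)

theorem HasCompactSupport.gradient (hu : HasCompactSupport u) : HasCompactSupport (gradient u) :=
  (hu.fderiv (𝕜 := ℝ)).comp_left (g := (toDual ℝ F).symm) (map_zero _)

theorem ContDiff.integrable_norm_gradient_sq [MeasurableSpace F] [OpensMeasurableSpace F]
    {μ : Measure F} [IsFiniteMeasureOnCompacts μ] (hu : ContDiff ℝ 1 u)
    (hsupp : HasCompactSupport u) : Integrable (fun x => ‖gradient u x‖ ^ 2) μ := by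
  have hcont : Continuous fun x => ‖gradient u x‖ ^ 2 := hu.continuous_gradient.norm.pow 2
  exact hcont.integrable_of_hasCompactSupport
    (hsupp.gradient.comp_left (g := fun t : F => ‖t‖ ^ 2) (by simp))

end Gradient

theorem abs_integral_le_of_abs_le_mul_mul {X : Type*} [MeasurableSpace X] {μ : Measure X}
    {f F G : X → ℝ} {K : ℝ} (hK : 0 ≤ K) (hF : Integrable (fun x => F x ^ 2) μ)
    (hG : Integrable (fun x => G x ^ 2) μ) (hf : ∀ᵐ x ∂μ, |f x| ≤ K * (F x * G x)) :
    |∫ x, f x ∂μ| ≤ K / 2 * ((∫ x, F x ^ 2 ∂μ) + ∫ x, G x ^ 2 ∂μ) := by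
  have hamgm : ∀ᵐ x ∂μ, |f x| ≤ K / 2 * (F x ^ 2 + G x ^ 2) := by
    filter_upwards [hf] with x hx
    nlinarith [mul_nonneg hK (sq_nonneg (F x - G x))]
  calc |∫ x, f x ∂μ| ≤ ∫ x, |f x| ∂μ := abs_integral_le_integral_abs
    _ ≤ ∫ x, K / 2 * (F x ^ 2 + G x ^ 2) ∂μ :=
      integral_mono_of_nonneg (.of_forall fun x => abs_nonneg _) ((hF.add hG).const_mul _) hamgm
    _ = K / 2 * ((∫ x, F x ^ 2 ∂μ) + ∫ x, G x ^ 2 ∂μ) := by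
      rw [integral_const_mul, integral_add hF hG]

theorem LinearMap.IsSymmetric.abs_inner_sub_inv_mul_inner_le {E : Type*} [NormedAddCommGroup E]
    [InnerProductSpace ℝ E] [FiniteDimensional ℝ E] {T : E →ₗ[ℝ] E} (hT : T.IsSymmetric)
    {ν c : ℝ} (hν : 0 < ν) (hc0 : 0 ≤ c) (hc : ∀ μ, HasEigenvalue T μ → |μ - ν| ≤ c) (x y : E) :
    |⟪x, y⟫_ℝ - ν⁻¹ * ⟪T x, y⟫_ℝ| ≤ c / ν * (‖x‖ * ‖y‖) := by
  have hrewrite : ⟪x, y⟫_ℝ - ν⁻¹ * ⟪T x, y⟫_ℝ = -ν⁻¹ * ⟪T x - ν • x, y⟫_ℝ := by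
    rw [inner_sub_left, real_inner_smul_left]
    field_simp
    ring
  calc |⟪x, y⟫_ℝ - ν⁻¹ * ⟪T x, y⟫_ℝ| = ν⁻¹ * |⟪T x - ν • x, y⟫_ℝ| := by
        rw [hrewrite, abs_mul, abs_neg, abs_of_pos (inv_pos.2 hν)]
    _ ≤ ν⁻¹ * (c * ‖x‖ * ‖y‖) := by
        gcongr
        exact (abs_real_inner_le_norm _ _).trans
          (mul_le_mul_of_nonneg_right (hT.norm_apply_sub_smul_le hc0 hc x) (norm_nonneg _))
    _ = c / ν * (‖x‖ * ‖y‖) := by ring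

theorem Matrix.IsSymm.abs_inner_sub_inv_mul_inner_toEuclideanLin_le {n : Type*} [Fintype n]
    [DecidableEq n] {A : Matrix n n ℝ} (hA : A.IsSymm) {ν c : ℝ} (hν : 0 < ν) (hc0 : 0 ≤ c)
    (hc : ∀ μ, HasEigenvalue (toLin' A) μ → |μ - ν| ≤ c) (x y : EuclideanSpace ℝ n) :
    |⟪x, y⟫_ℝ - ν⁻¹ * ⟪toEuclideanLin A x, y⟫_ℝ| ≤ c / ν * (‖x‖ * ‖y‖) :=
  (isSymmetric_toEuclideanLin_iff.2 (isHermitian_iff_isSymm.2 hA)).abs_inner_sub_inv_mul_inner_le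
    hν hc0 (fun μ hμ => hc μ ((hasEigenvalue_toEuclideanLin_iff A μ).1 hμ)) x y

theorem contraction_of_eigenvalue_bounds_general (Ω : Set (EuclideanSpace ℝ (Fin 2)))
    (B : EuclideanSpace ℝ (Fin 2) → Matrix (Fin 2) (Fin 2) ℝ)
    (m M α : ℝ) (hm : 0 < m) (hmM : m ≤ M) (hα0 : 0 < α) (hα1 : α < 1)
    (heig : ∀ᵐ x ∂(volume.restrict Ω), (B x).IsSymm ∧
      ∀ μ : ℝ, Module.End.HasEigenvalue (Matrix.toLin' (B x)) μ →
        μ ∈ Set.Icc (m * α) (M * α)) :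
    ∃ γ : ℝ, 0 < γ ∧ γ < 1 ∧
      ∀ v w : EuclideanSpace ℝ (Fin 2) → ℝ,
        ContDiff ℝ 1 v → ContDiff ℝ 1 w →
        HasCompactSupport v → HasCompactSupport w →
        tsupport v ⊆ Ω → tsupport w ⊆ Ω →
        (∫ x in Ω, ‖gradient v x‖ ^ 2) = 1 → (∫ x in Ω, ‖gradient w x‖ ^ 2) = 1 →
        |∫ x in Ω, ((inner ℝ (gradient v x) (gradient w x) : ℝ)
            - (1 / ((m + M) / 2)) *
              (inner ℝ (Matrix.toEuclideanLin (B x) (gradient v x)) (gradient w x) : ℝ))| ≤ γ := by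
  set ν := (m + M) / 2 with hν_def
  have hmα : 0 < m * α := mul_pos hm hα0
  have hMα : M * α + m * α < m + M := by nlinarith
  have hmMα : m * α ≤ M * α := mul_le_mul_of_nonneg_right hmM hα0.le
  have hν : m * α < ν := by linarith
  have hspec : ∀ μ ∈ Set.Icc (m * α) (M * α), |μ - ν| ≤ ν - m * α := fun μ hμ =>
    abs_le.2 ⟨by linarith [hμ.1], by linarith [hμ.2]⟩
  refine ⟨(ν - m * α) / ν, div_pos (by linarith) (by linarith),
    (div_lt_one (by linarith)).2 (by linarith), ?_⟩
  intro v w hv hw hvc hwc _ _ hv1 hw1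
  have hpointwise : ∀ᵐ x ∂volume.restrict Ω,
      |⟪gradient v x, gradient w x⟫_ℝ
          - 1 / ν * ⟪toEuclideanLin (B x) (gradient v x), gradient w x⟫_ℝ|
        ≤ (ν - m * α) / ν * (‖gradient v x‖ * ‖gradient w x‖) := by
    filter_upwards [heig] with x ⟨hsymm, hev⟩
    rw [one_div]
    exact hsymm.abs_inner_sub_inv_mul_inner_toEuclideanLin_le (by linarith) (by linarith)
      (fun μ hμ => hspec μ (hev μ hμ)) _ _
  calc _ ≤ (ν - m * α) / ν / 2 *
          ((∫ x in Ω, ‖gradient v x‖ ^ 2) + ∫ x in Ω, ‖gradient w x‖ ^ 2) :=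
        abs_integral_le_of_abs_le_mul_mul (div_nonneg (by linarith) (by linarith))
          (hv.integrable_norm_gradient_sq hvc) (hw.integrable_norm_gradient_sq hwc) hpointwise
    _ = (ν - m * α) / ν := by rw [hv1, hw1]; ring

/-- Discrete contraction estimate for the perturbed Laplacian bilinear form:
if the symmetric matrix field `B` has eigenvalues a.e. in `[mα, Mα]`, then with
`ν = (m+M)/2` the form `(v,w) ↦ ∫ Dv·Dw - (1/ν)(B Dv)·Dw` is bounded by some
`γ ∈ (0,1)` on pairs with unit `H¹` seminorm. -/
theorem contraction_of_eigenvalue_bounds (Ω : Set (EuclideanSpace ℝ (Fin 2)))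
    (hΩ : MeasurableSet Ω)
    (B : EuclideanSpace ℝ (Fin 2) → Matrix (Fin 2) (Fin 2) ℝ)
    (hBmeas : ∀ i j, Measurable fun x => B x i j)
    (m M α : ℝ) (hm : 0 < m) (hmM : m ≤ M) (hα0 : 0 < α) (hα1 : α < 1)
    (hα2 : α ≤ (m + M) / (2 * m))
    (heig : ∀ᵐ x ∂(volume.restrict Ω), (B x).IsSymm ∧
      ∀ μ : ℝ, Module.End.HasEigenvalue (Matrix.toLin' (B x)) μ →
        μ ∈ Set.Icc (m * α) (M * α)) :
    ∃ γ : ℝ, 0 < γ ∧ γ < 1 ∧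
      ∀ v w : EuclideanSpace ℝ (Fin 2) → ℝ,
        ContDiff ℝ 1 v → ContDiff ℝ 1 w →
        HasCompactSupport v → HasCompactSupport w →
        tsupport v ⊆ Ω → tsupport w ⊆ Ω →
        (∫ x in Ω, ‖gradient v x‖ ^ 2) = 1 → (∫ x in Ω, ‖gradient w x‖ ^ 2) = 1 →
        |∫ x in Ω, ((inner ℝ (gradient v x) (gradient w x) : ℝ)
            - (1 / ((m + M) / 2)) *
              (inner ℝ (Matrix.toEuclideanLin (B x) (gradient v x)) (gradient w x) : ℝ))| ≤ γ :=
  contraction_of_eigenvalue_bounds_general Ω B m M α hm hmM hα0 hα1 heig
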